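/- Let (X,d) be a bounded metric space with Samuel compactification (S(X), τ, ∂). Then every sequence in S(X) that converges in the topology τ also converges (to the same limit) with respect to the metric ∂. -/

import Mathlib

open scoped BoundedContinuousFunction
noncomputable section

variable (X : Type*) [MetricSpace X]

/-- The star subalgebra of bounded *uniformly continuous* complex-valued functions
inside the C*-algebra of bounded continuous functions. -/
def UCB : StarSubalgebra ℂ (X →ᵇ ℂ) where
  carrier := {f | UniformContinuous ⇑f}
  mul_mem' := by
    intro a b ha hb
    simp only [Set.mem_setOf_eq] at *
    have hbd : Bornology.IsBounded (Set.range fun x => ((a x : ℂ), (b x : ℂ))) := by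
      refine Bornology.IsBounded.subset ((a.isBounded_range).prod (b.isBounded_range)) ?_
      rintro p ⟨x, rfl⟩
      exact ⟨⟨x, rfl⟩, ⟨x, rfl⟩⟩
    set K := closure (Set.range fun x => ((a x : ℂ), (b x : ℂ))) with hK
    have hKc : IsCompact K := hbd.isCompact_closure
    haveI : CompactSpace K := isCompact_iff_compactSpace.mp hKc
    have hmul : UniformContinuous fun p : K => (p : ℂ × ℂ).1 * (p : ℂ × ℂ).2 :=
      CompactSpace.uniformContinuous_of_continuous
        ((continuous_fst.comp continuous_subtype_val).mul
          (continuous_snd.comp continuous_subtype_val))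
    have hF : UniformContinuous fun x : X => (⟨(a x, b x), subset_closure ⟨x, rfl⟩⟩ : K) :=
      (ha.prodMk hb).subtype_mk _
    have : UniformContinuous fun x : X => a x * b x := hmul.comp hF
    simpa [BoundedContinuousFunction.coe_mul, Pi.mul_def] using this
  one_mem' := by
    simpa [BoundedContinuousFunction.coe_one, Pi.one_def] using (uniformContinuous_const : UniformContinuous fun _ : X => (1 : ℂ))
  add_mem' := by
    intro a b ha hb
    simp only [Set.mem_setOf_eq] at *
    simpa [BoundedContinuousFunction.coe_add, Pi.add_def] using ha.add hb
  zero_mem' := by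
    simpa [BoundedContinuousFunction.coe_zero, Pi.zero_def] using (uniformContinuous_const : UniformContinuous fun _ : X => (0 : ℂ))
  algebraMap_mem' := by
    intro c
    have : ⇑(algebraMap ℂ (X →ᵇ ℂ) c) = fun _ : X => c := by
      ext x; simp [Algebra.algebraMap_eq_smul_one]
    simp only [Set.mem_setOf_eq, this]
    exact uniformContinuous_const
  star_mem' := by
    intro a ha
    simp only [Set.mem_setOf_eq] at *
    have : UniformContinuous fun x : X => (starRingEnd ℂ) (a x) :=
      (Complex.isometry_conj.uniformContinuous).comp ha
    simpa [BoundedContinuousFunction.coe_star, Pi.star_def] using this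

/-- The Samuel compactification of a metric space `X`: the character space (Gelfand spectrum)
of the algebra of bounded uniformly continuous functions, with the weak* topology. -/
def Samuel : Type _ := WeakDual.characterSpace ℂ (UCB X)

instance : TopologicalSpace (Samuel X) := by unfold Samuel; infer_instance

instance : FunLike (Samuel X) (UCB X) ℂ := by unfold Samuel; infer_instance

/-- Evaluation at a point of `X`, as a continuous linear functional on `UCB X`. -/
def samuelEvalCLM (x : X) : WeakDual ℂ (UCB X) :=
  LinearMap.mkContinuous
    { toFun := fun f => (f : X →ᵇ ℂ) x
      map_add' := fun f g => by simp
      map_smul' := fun c f => by simp } 1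
    (fun f => by rw [one_mul]; exact BoundedContinuousFunction.norm_coe_le_norm (f : X →ᵇ ℂ) x)

lemma samuelEvalCLM_apply (x : X) (f : UCB X) : samuelEvalCLM X x f = (f : X →ᵇ ℂ) x := rfl

/-- Evaluation at a point of `X`, as a character of `UCB X`:
this is the canonical embedding of `X` into its Samuel compactification. -/
def samuelEmbed (x : X) : Samuel X :=
  ⟨samuelEvalCLM X x, by
    refine ⟨fun h => ?_, fun f g => ?_⟩
    · have h1 : samuelEvalCLM X x 1 = 0 := by rw [h]; rfl
      have h2 : samuelEvalCLM X x 1 = 1 := rfl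
      rw [h1] at h2
      exact zero_ne_one h2
    · simp only [samuelEvalCLM_apply]
      simp⟩

/-- The bounded `1`-Lipschitz real-valued functions on `X`. -/
def Lip1 : Type _ := {f : X →ᵇ ℝ // LipschitzWith 1 ⇑f}

/-- A bounded `1`-Lipschitz real function, regarded as an element of `UCB X`. -/
def toUCB (f : Lip1 X) : UCB X :=
  ⟨BoundedContinuousFunction.comp Complex.ofReal
      (Complex.isometry_ofReal.lipschitz) f.1,
   by
     have : UniformContinuous fun x : X => (f.1 x : ℂ) :=
       Complex.isometry_ofReal.uniformContinuous.comp f.2.uniformContinuous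
     exact this⟩

/-- The topometric distance `∂` on the Samuel compactification:
`∂(a,b) = sup {|a(f) - b(f)| : f : X → ℝ bounded and 1-Lipschitz}`. -/
def samuelDist (a b : Samuel X) : ℝ :=
  ⨆ f : Lip1 X, ‖a (toUCB X f) - b (toUCB X f)‖

/-- The `∂`-gap between two subsets of the Samuel compactification. -/
def samuelSetDist (A B : Set (Samuel X)) : ℝ :=
  sInf {r | ∃ a ∈ A, ∃ b ∈ B, r = samuelDist X a b}

/-!
Evaluating a character of `UCB X` at a real function is a limit of point evaluations along a
filter on `X` (a function bounded away from `0` is invertible in `UCB X`, so no character can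
stay away from all point evaluations); hence characters commute with `max`, products and
truncations of real functions.

If `∂(aₙ, ℓ) ≥ ε` infinitely often, there are `1`-Lipschitz `fₙ` with `aₙ(fₙ) > ℓ(fₙ) + ε/2`.
Truncating `fₙ` just above the level `ℓ(fₙ)` gives functions killed by `ℓ`, hence almost killed
by all later `aₘ`; subtracting their running maxima from the truncations slightly higher up
gives uniformly Lipschitz bumps with pairwise disjoint supports, the `k`-th one carrying mass
`≥ c/2` (where `c = ε/6`) for the `k`-th point of a subsequence. The supremum `G` of the even
bumps is then uniformly continuous, with `aₙ(G) ≥ c/2` along the even terms and `aₙ(G) = 0`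
along the odd ones, contradicting `aₙ(G) → ℓ(G)`.
-/

open Filter Topology BoundedContinuousFunction
open scoped NNReal

theorem UniformContinuous.inv₀_of_le_norm {α 𝕜 : Type*} [PseudoMetricSpace α]
    [NormedDivisionRing 𝕜] {f : α → 𝕜} {δ : ℝ} (hf : UniformContinuous f) (hδ : 0 < δ)
    (hfδ : ∀ x, δ ≤ ‖f x‖) : UniformContinuous fun x => (f x)⁻¹ := by
  have hne : ∀ x, f x ≠ 0 := fun x => norm_pos_iff.mp (hδ.trans_le (hfδ x))
  rw [Metric.uniformContinuous_iff] at hf ⊢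
  intro ε hε
  obtain ⟨η, hη, hfη⟩ := hf (ε * (δ * δ)) (by positivity)
  refine ⟨η, hη, fun {x y} hxy => ?_⟩
  rw [dist_inv_inv₀ (hne x) (hne y), div_lt_iff₀ (by simp [hne])]
  calc dist (f x) (f y) < ε * (δ * δ) := hfη hxy
    _ ≤ ε * (‖f x‖ * ‖f y‖) := by gcongr <;> exact hfδ _

theorem LipschitzWith.ciSup {α ι : Type*} [PseudoMetricSpace α] [Nonempty ι] {f : ι → α → ℝ}
    {K : ℝ≥0} (hf : ∀ i, LipschitzWith K (f i)) (hbdd : ∀ x, BddAbove (Set.range (f · x))) :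
    LipschitzWith K fun x => ⨆ i, f i x :=
  LipschitzWith.of_le_add_mul K fun x y => ciSup_le fun i =>
    ((hf i).le_add_mul x y).trans (by gcongr; exact le_ciSup (hbdd y) i)

theorem LipschitzWith.partialSups {α : Type*} [PseudoMetricSpace α] {f : ℕ → α → ℝ} {K : ℝ≥0}
    (hf : ∀ k, LipschitzWith K (f k)) (n : ℕ) :
    LipschitzWith K fun x => partialSups (f · x) n :=
  LipschitzWith.of_le_add_mul K fun x y => partialSups_le _ _ _ fun j hj =>
    ((hf j).le_add_mul x y).trans (by gcongr; exact le_partialSups_of_le (f · y) hj)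

theorem exists_strictMono_of_frequently_of_eventually {α : Type*} {P : ℕ → α → Prop}
    {R : α → ℕ → Prop} (hP : ∃ᶠ n in atTop, ∃ w, P n w) (hR : ∀ w, ∀ᶠ n in atTop, R w n) :
    ∃ (r : ℕ → ℕ) (w : ℕ → α), StrictMono r ∧ (∀ k, P (r k) (w k)) ∧
      ∀ j k, j < k → R (w j) (r k) := by
  obtain ⟨p, hpP, hpR⟩ := exists_seq_of_forall_finset_exists (fun q : ℕ × α => P q.1 q.2)
    (fun q q' => q.1 < q'.1 ∧ R q.2 q'.1) fun s _ => by
      have hs : ∀ᶠ n in atTop, ∀ q ∈ s, q.1 < n ∧ R q.2 n :=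
        (eventually_all_finset s).2 fun q _ => (eventually_gt_atTop q.1).and (hR q.2)
      obtain ⟨n, ⟨w, hw⟩, hn⟩ := (hP.and_eventually hs).exists
      exact ⟨(n, w), hw, hn⟩
  exact ⟨fun k => (p k).1, fun k => (p k).2, fun j k h => (hpR j k h).1, hpP,
    fun j k h => (hpR j k h).2⟩

def ramp (t c s : ℝ) : ℝ := min (max (s - t) 0) c

theorem lipschitzWith_ramp (t c : ℝ) : LipschitzWith 1 (ramp t c) :=
  (((IsometryEquiv.subRight t).isometry.lipschitz).max_const 0).min_const c

theorem ramp_mem_Icc {c : ℝ} (hc : 0 ≤ c) (t s : ℝ) : ramp t c s ∈ Set.Icc 0 c :=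
  ⟨le_min (le_max_right _ _) hc, min_le_right _ _⟩

theorem ramp_of_le {t c s : ℝ} (hc : 0 ≤ c) (h : s ≤ t) : ramp t c s = 0 := by
  simp [ramp, h, hc]

theorem ramp_of_add_le {t c s : ℝ} (h : t + c ≤ s) : ramp t c s = c :=
  min_eq_right (le_max_of_le_left (by linarith))

theorem lt_of_ramp_pos {t c s : ℝ} (h : 0 < ramp t c s) : t < s := by
  by_contra! hs
  exact h.not_ge ((min_le_left _ _).trans (max_le (by linarith) le_rfl))

def rampComp {α : Type*} [TopologicalSpace α] (t c : ℝ) (f : α →ᵇ ℝ) : α →ᵇ ℝ :=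
  .comp (ramp t c) (lipschitzWith_ramp t c) f

theorem LipschitzWith.rampComp {α : Type*} [PseudoMetricSpace α] {K : ℝ≥0} {f : α →ᵇ ℝ}
    (hf : LipschitzWith K f) (t c : ℝ) : LipschitzWith K (rampComp t c f) := by
  rw [← one_mul K]
  exact (lipschitzWith_ramp t c).comp hf

section DisjointBump

variable {α : Type*} {ζ χ : ℕ → α → ℝ} {c : ℝ}

def disjointBump (ζ χ : ℕ → α → ℝ) (k : ℕ) (x : α) : ℝ :=
  max (χ (k + 1) x - partialSups (ζ · x) k) 0

theorem lipschitzWith_disjointBump [PseudoMetricSpace α] (hζ : ∀ k, LipschitzWith 1 (ζ k))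
    (hχ : ∀ k, LipschitzWith 1 (χ k)) (k : ℕ) : LipschitzWith 2 (disjointBump ζ χ k) := by
  have h := ((hχ (k + 1)).sub (LipschitzWith.partialSups hζ k)).max_const 0
  rwa [one_add_one_eq_two] at h

theorem disjointBump_mem_Icc (hζ : ∀ k x, 0 ≤ ζ k x) (hχ : ∀ k x, χ k x ∈ Set.Icc 0 c)
    (k : ℕ) (x : α) : disjointBump ζ χ k x ∈ Set.Icc 0 c := by
  have hM : 0 ≤ partialSups (ζ · x) k := (hζ 0 x).trans (le_partialSups_of_le (ζ · x) k.zero_le)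
  exact ⟨le_max_right _ _, max_le (by linarith [(hχ (k + 1) x).2]) ((hχ 0 x).1.trans (hχ 0 x).2)⟩

theorem disjointBump_eq_zero_of_lt (hζ : ∀ k x, 0 ≤ ζ k x) (hχ : ∀ k x, χ k x ≤ c)
    (hsupp : ∀ k x, 0 < χ k x → c ≤ ζ k x) {j k : ℕ} (hjk : j < k) {x : α}
    (hj : 0 < disjointBump ζ χ j x) : disjointBump ζ χ k x = 0 := by
  have hMj : 0 ≤ partialSups (ζ · x) j := (hζ 0 x).trans (le_partialSups_of_le (ζ · x) j.zero_le)
  have hχj : 0 < χ (j + 1) x := by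
    by_contra! h
    exact hj.ne' (max_eq_right (by linarith))
  have hMk : c ≤ partialSups (ζ · x) k := (hsupp _ x hχj).trans (le_partialSups_of_le (ζ · x) hjk)
  exact max_eq_right (by linarith [hχ (k + 1) x])

theorem pairwise_disjointBump (hζ : ∀ k x, 0 ≤ ζ k x) (hχ : ∀ k x, χ k x ≤ c)
    (hsupp : ∀ k x, 0 < χ k x → c ≤ ζ k x) :
    Pairwise fun j k => ∀ x, disjointBump ζ χ j x = 0 ∨ disjointBump ζ χ k x = 0 := by
  have key {j k : ℕ} (hjk : j < k) (x : α) :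
      disjointBump ζ χ j x = 0 ∨ disjointBump ζ χ k x = 0 :=
    (le_max_right _ _ : (0 : ℝ) ≤ disjointBump ζ χ j x).eq_or_lt.imp Eq.symm
      (disjointBump_eq_zero_of_lt hζ hχ hsupp hjk)
  intro j k hjk x
  rcases hjk.lt_or_gt with h | h
  exacts [key h x, (key h x).symm]

end DisjointBump

section

variable {X}

theorem UCB.isUnit_of_le_norm {g : UCB X} {δ : ℝ} (hδ : 0 < δ)
    (hg : ∀ x, δ ≤ ‖(g : X →ᵇ ℂ) x‖) : IsUnit g := by
  have hne : ∀ x, (g : X →ᵇ ℂ) x ≠ 0 := fun x => norm_pos_iff.mp (hδ.trans_le (hg x))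
  let inv : X →ᵇ ℂ := .ofNormedAddCommGroup (fun x => ((g : X →ᵇ ℂ) x)⁻¹)
    ((g : X →ᵇ ℂ).continuous.inv₀ hne) δ⁻¹ fun x => by rw [norm_inv]; exact inv_anti₀ hδ (hg x)
  have hinv : inv ∈ UCB X := UniformContinuous.inv₀_of_le_norm g.2 hδ hg
  exact IsUnit.of_mul_eq_one ⟨inv, hinv⟩
    (Subtype.ext (BoundedContinuousFunction.ext fun x => mul_inv_cancel₀ (hne x)))

namespace Samuel

instance : AlgHomClass (Samuel X) ℂ (UCB X) ℂ := by unfold Samuel; infer_instance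

theorem continuous_eval (f : UCB X) : Continuous fun b : Samuel X => b f := by
  unfold Samuel
  exact (WeakDual.eval_continuous f).comp continuous_subtype_val

theorem exists_forall_norm_sub_lt (b : Samuel X) (F : Finset (UCB X)) {ε : ℝ} (hε : 0 < ε) :
    ∃ x : X, ∀ f ∈ F, ‖(f : X →ᵇ ℂ) x - b f‖ < ε := by
  by_contra! hfar
  let p : UCB X → UCB X := fun f => f - algebraMap ℂ (UCB X) (b f)
  let g : UCB X := ∑ f ∈ F, star (p f) * p f
  have hg : ∀ x, (g : X →ᵇ ℂ) x = ((∑ f ∈ F, ‖(f : X →ᵇ ℂ) x - b f‖ ^ 2 : ℝ) : ℂ) := by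
    intro x
    simp only [g, p]
    rw [AddSubmonoidClass.coe_finsetSum, BoundedContinuousFunction.coe_sum, Finset.sum_apply]
    push_cast
    refine Finset.sum_congr rfl fun f _ => ?_
    simp [Algebra.algebraMap_eq_smul_one, ← map_sub, Complex.conj_mul']
  have hgε : ∀ x, ε ^ 2 ≤ ‖(g : X →ᵇ ℂ) x‖ := by
    intro x
    obtain ⟨f, hf, hεf⟩ := hfar x
    rw [hg, Complex.norm_real, Real.norm_of_nonneg (by positivity)]
    exact (pow_le_pow_left₀ hε.le hεf 2).trans <|
      Finset.single_le_sum (f := fun f : UCB X => ‖(f : X →ᵇ ℂ) x - b f‖ ^ 2)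
        (fun f _ => sq_nonneg _) hf
  have hbg : b g = 0 := by simp [g, p, AlgHomClass.commutes]
  exact ((UCB.isUnit_of_le_norm (by positivity) hgε).map b).ne_zero hbg

theorem exists_tendsto_apply (b : Samuel X) :
    ∃ L : Filter X, L.NeBot ∧ ∀ f : UCB X, Tendsto (fun x => (f : X →ᵇ ℂ) x) L (𝓝 (b f)) := by
  classical
  let S : Finset (UCB X) × {e : ℝ // 0 < e} → Set X :=
    fun p => {x | ∀ f ∈ p.1, ‖(f : X →ᵇ ℂ) x - b f‖ < p.2}
  refine ⟨⨅ p, 𝓟 (S p), ?_, fun f => Metric.tendsto_nhds.2 fun δ hδ => ?_⟩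
  · have : Nonempty (Finset (UCB X) × {e : ℝ // 0 < e}) := ⟨(∅, ⟨1, one_pos⟩)⟩
    refine iInf_neBot_of_directed' (fun p q => ⟨(p.1 ∪ q.1, ⟨min p.2 q.2, lt_min p.2.2 q.2.2⟩),
      principal_mono.2 fun x hx f hf => ?_, principal_mono.2 fun x hx f hf => ?_⟩)
      fun p => principal_neBot_iff.2 (exists_forall_norm_sub_lt b p.1 p.2.2)
    · exact (hx f (Finset.mem_union_left _ hf)).trans_le (min_le_left _ _)
    · exact (hx f (Finset.mem_union_right _ hf)).trans_le (min_le_right _ _)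
  · filter_upwards [mem_iInf_of_mem ({f}, ⟨δ, hδ⟩) (mem_principal_self _)] with x hx
    simpa [dist_eq_norm] using hx f (Finset.mem_singleton_self f)

def ucbOfReal (f : X →ᵇ ℝ) (hf : UniformContinuous f) : UCB X :=
  ⟨.comp Complex.ofReal Complex.isometry_ofReal.lipschitz f,
    Complex.isometry_ofReal.uniformContinuous.comp hf⟩

open Classical in
def realEval (b : Samuel X) (f : X →ᵇ ℝ) : ℝ :=
  if hf : UniformContinuous f then (b (ucbOfReal f hf)).re else 0

theorem exists_tendsto_realEval (b : Samuel X) :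
    ∃ L : Filter X, L.NeBot ∧
      ∀ f : X →ᵇ ℝ, UniformContinuous f → Tendsto f L (𝓝 (realEval b f)) := by
  obtain ⟨L, hL, hlim⟩ := exists_tendsto_apply b
  refine ⟨L, hL, fun f hf => ?_⟩
  rw [realEval, dif_pos hf]
  exact (Complex.continuous_re.tendsto _).comp (hlim (ucbOfReal f hf))

theorem apply_ucbOfReal (b : Samuel X) {f : X →ᵇ ℝ} (hf : UniformContinuous f) :
    b (ucbOfReal f hf) = realEval b f := by
  obtain ⟨L, hL, hlim⟩ := exists_tendsto_apply b
  have him : Tendsto (fun _ => (0 : ℝ)) L (𝓝 (b (ucbOfReal f hf)).im) :=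
    (Complex.continuous_im.tendsto _).comp (hlim (ucbOfReal f hf))
  refine Complex.ext ?_ ?_
  · simp [realEval, hf]
  · simpa using (tendsto_nhds_unique him tendsto_const_nhds)

theorem apply_toUCB (b : Samuel X) (f : Lip1 X) : b (toUCB X f) = realEval b f.1 :=
  apply_ucbOfReal b f.2.uniformContinuous

theorem realEval_eq_of_forall_tendsto (b : Samuel X) {g : X →ᵇ ℝ} (hg : UniformContinuous g)
    {y : ℝ} (h : ∀ L : Filter X,
      (∀ f : X →ᵇ ℝ, UniformContinuous f → Tendsto f L (𝓝 (realEval b f))) → Tendsto g L (𝓝 y)) :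
    realEval b g = y := by
  obtain ⟨L, _, hlim⟩ := exists_tendsto_realEval b
  exact tendsto_nhds_unique (hlim g hg) (h L hlim)

theorem realEval_mono (b : Samuel X) {f g : X →ᵇ ℝ} (hf : UniformContinuous f)
    (hg : UniformContinuous g) (h : ∀ x, f x ≤ g x) : realEval b f ≤ realEval b g := by
  obtain ⟨L, _, hlim⟩ := exists_tendsto_realEval b
  exact le_of_tendsto_of_tendsto' (hlim f hf) (hlim g hg) h

theorem realEval_mul_eq_zero (b : Samuel X) {f g : X →ᵇ ℝ} (hf : UniformContinuous f)
    (hg : UniformContinuous g) (h : ∀ x, f x * g x = 0) : realEval b f * realEval b g = 0 := by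
  obtain ⟨L, _, hlim⟩ := exists_tendsto_realEval b
  exact tendsto_nhds_unique ((hlim f hf).mul (hlim g hg)) (by simp [h])

theorem tendsto_realEval {ι : Type*} {l : Filter ι} {a : ι → Samuel X} {ℓ : Samuel X}
    (ha : Tendsto a l (𝓝 ℓ)) {f : X →ᵇ ℝ} (hf : UniformContinuous f) :
    Tendsto (fun i => realEval (a i) f) l (𝓝 (realEval ℓ f)) := by
  simp only [realEval, dif_pos hf]
  exact ((Complex.continuous_re.comp (continuous_eval _)).tendsto ℓ).comp ha

theorem realEval_neg (b : Samuel X) {f : X →ᵇ ℝ} (hf : UniformContinuous f) :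
    realEval b (-f) = -realEval b f :=
  realEval_eq_of_forall_tendsto b (by rw [coe_neg]; exact hf.neg) fun _ hL => by
    rw [coe_neg]; exact (hL f hf).neg

theorem realEval_rampComp (b : Samuel X) {f : X →ᵇ ℝ} (hf : UniformContinuous f) (t c : ℝ) :
    realEval b (rampComp t c f) = ramp t c (realEval b f) :=
  realEval_eq_of_forall_tendsto b
    (show UniformContinuous (rampComp t c f) from
      (lipschitzWith_ramp t c).uniformContinuous.comp hf)
    fun _ hL => ((lipschitzWith_ramp t c).continuous.tendsto (realEval b f)).comp (hL f hf)

instance : Nonempty (Lip1 X) := ⟨⟨0, LipschitzWith.const' 0⟩⟩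

theorem samuelDist_le_of_forall_realEval_le {a ℓ : Samuel X} {δ : ℝ}
    (h : ∀ f : Lip1 X, realEval a f.1 ≤ realEval ℓ f.1 + δ) : samuelDist X a ℓ ≤ δ := by
  refine ciSup_le fun f => ?_
  have hneg := h ⟨-f.1, by rw [coe_neg]; exact f.2.neg⟩
  rw [realEval_neg a f.2.uniformContinuous, realEval_neg ℓ f.2.uniformContinuous] at hneg
  rw [apply_toUCB, apply_toUCB, ← Complex.ofReal_sub, Complex.norm_real, Real.norm_eq_abs, abs_le]
  constructor <;> linarith [h f]

theorem exists_disjoint_bumps {b : ℕ → Samuel X} {ζ χ : ℕ → X →ᵇ ℝ} {c : ℝ}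
    (hζ : ∀ k, LipschitzWith 1 (ζ k)) (hχ : ∀ k, LipschitzWith 1 (χ k))
    (hζc : ∀ k x, ζ k x ∈ Set.Icc 0 c) (hχc : ∀ k x, χ k x ∈ Set.Icc 0 c)
    (hsupp : ∀ k x, 0 < χ k x → c ≤ ζ k x) (hbχ : ∀ k, c ≤ realEval (b k) (χ k))
    (hbζ : ∀ j k, j < k → realEval (b k) (ζ j) ≤ c / 2) :
    ∃ D : ℕ → X →ᵇ ℝ, (∀ k, LipschitzWith 2 (D k)) ∧ (∀ k x, D k x ∈ Set.Icc 0 c) ∧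
      (Pairwise fun j k => ∀ x, D j x = 0 ∨ D k x = 0) ∧
      ∀ k, c / 2 ≤ realEval (b (k + 1)) (D k) := by
  have hζ0 : ∀ k x, 0 ≤ ζ k x := fun k x => (hζc k x).1
  have hD := lipschitzWith_disjointBump hζ hχ
  have hDc := disjointBump_mem_Icc hζ0 hχc
  refine ⟨fun k => .ofNormedAddCommGroup _ (hD k).continuous c fun x => by
      rw [Real.norm_of_nonneg (hDc k x).1]; exact (hDc k x).2,
    hD, hDc, pairwise_disjointBump hζ0 (fun k x => (hχc k x).2) hsupp, fun k => ?_⟩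
  rw [realEval_eq_of_forall_tendsto _ (hD k).uniformContinuous fun L hL =>
    ((hL _ (hχ (k + 1)).uniformContinuous).sub
      (Tendsto.partialSups_apply fun j _ => hL _ (hζ j).uniformContinuous)).max tendsto_const_nhds]
  have := partialSups_le _ k _ fun j hj => hbζ j (k + 1) (Nat.lt_succ_of_le hj)
  exact le_max_of_le_left (by linarith [hbχ (k + 1)])

theorem not_tendsto_of_disjoint_bumps {b : ℕ → Samuel X} {ℓ : Samuel X} {D : ℕ → X →ᵇ ℝ}
    {K : ℝ≥0} {c δ : ℝ} (hD : ∀ k, LipschitzWith K (D k)) (hDc : ∀ k x, D k x ∈ Set.Icc 0 c)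
    (hdisj : Pairwise fun j k => ∀ x, D j x = 0 ∨ D k x = 0) (hδ : 0 < δ)
    (hbD : ∀ k, δ ≤ realEval (b k) (D k)) : ¬ Tendsto b atTop (𝓝 ℓ) := by
  intro hb
  have hbdd : ∀ x, BddAbove (Set.range fun i => D (2 * i) x) :=
    fun x => ⟨c, by rintro _ ⟨i, rfl⟩; exact (hDc _ x).2⟩
  have hGlip : LipschitzWith K fun x => ⨆ i, D (2 * i) x :=
    LipschitzWith.ciSup (fun i => hD (2 * i)) hbdd
  let G : X →ᵇ ℝ := .ofNormedAddCommGroup _ hGlip.continuous c fun x => by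
    rw [Real.norm_of_nonneg ((hDc 0 x).1.trans (le_ciSup (hbdd x) 0))]
    exact ciSup_le fun i => (hDc _ x).2
  have hG : UniformContinuous G := hGlip.uniformContinuous
  have heven : ∀ i, δ ≤ realEval (b (2 * i)) G := fun i =>
    (hbD _).trans (realEval_mono _ (hD _).uniformContinuous hG fun x => le_ciSup (hbdd x) i)
  have hodd : ∀ i, realEval (b (2 * i + 1)) G = 0 := by
    intro i
    have hGD : ∀ x, G x * D (2 * i + 1) x = 0 := by
      intro x
      by_cases hx : D (2 * i + 1) x = 0
      · simp [hx]
      have : ∀ j, D (2 * j) x = 0 := fun j => (hdisj (by omega) x).resolve_right hx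
      simp [G, this]
    refine (mul_eq_zero.1 (realEval_mul_eq_zero _ hG (hD _).uniformContinuous hGD)).resolve_right ?_
    linarith [hbD (2 * i + 1)]
  have hlim := tendsto_realEval hb hG
  have hpos : δ ≤ realEval ℓ G :=
    ge_of_tendsto' (hlim.comp (strictMono_mul_left_of_pos two_pos).tendsto_atTop) heven
  have hzero : realEval ℓ G = 0 := by
    have hsub : StrictMono fun i : ℕ => 2 * i + 1 := fun i j h => by dsimp only; omega
    exact tendsto_nhds_unique (hlim.comp hsub.tendsto_atTop) (by simp [Function.comp_def, hodd])
  linarith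

theorem exists_subseq_disjoint_bumps {a : ℕ → Samuel X} {ℓ : Samuel X}
    (ha : Tendsto a atTop (𝓝 ℓ)) {c : ℝ} (hc : 0 < c)
    (hfar : ∃ᶠ n in atTop, ∃ f : Lip1 X, realEval ℓ f.1 + 3 * c < realEval (a n) f.1) :
    ∃ r : ℕ → ℕ, StrictMono r ∧ ∃ D : ℕ → X →ᵇ ℝ, (∀ k, LipschitzWith 2 (D k)) ∧
      (∀ k x, D k x ∈ Set.Icc 0 c) ∧ (Pairwise fun j k => ∀ x, D j x = 0 ∨ D k x = 0) ∧
      ∀ k, c / 2 ≤ realEval (a (r (k + 1))) (D k) := by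
  let lower (f : Lip1 X) : X →ᵇ ℝ := rampComp (realEval ℓ f.1 + c) c f.1
  let upper (f : Lip1 X) : X →ᵇ ℝ := rampComp (realEval ℓ f.1 + 2 * c) c f.1
  -- `ℓ` vanishes on `lower f`, and `aₙ` takes the value `c` on `upper f` once `aₙ(f) ≥ ℓ(f) + 3c`.
  have hlower : ∀ f : Lip1 X, ∀ᶠ n in atTop, realEval (a n) (lower f) ≤ c / 2 := by
    intro f
    have h := tendsto_realEval ha (f.2.rampComp (realEval ℓ f.1 + c) c).uniformContinuous
    rw [realEval_rampComp _ f.2.uniformContinuous, ramp_of_le hc.le (by linarith)] at h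
    exact h.eventually_le_const (by linarith)
  obtain ⟨r, f, hr, hgap, hsmall⟩ := exists_strictMono_of_frequently_of_eventually hfar hlower
  refine ⟨r, hr, exists_disjoint_bumps (b := a ∘ r) (ζ := fun k => lower (f k))
    (χ := fun k => upper (f k)) (fun k => (f k).2.rampComp _ c) (fun k => (f k).2.rampComp _ c)
    (fun k x => ramp_mem_Icc hc.le _ _) (fun k x => ramp_mem_Icc hc.le _ _)
    (fun k x hx => (ramp_of_add_le ?_).ge) (fun k => ?_) hsmall⟩
  · linarith [lt_of_ramp_pos hx]
  · simp only [Function.comp_apply, upper]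
    rw [realEval_rampComp _ (f k).2.uniformContinuous, ramp_of_add_le (by linarith [hgap k])]

end Samuel
end

theorem samuel_tendsto_dist_of_tendsto
    (a : ℕ → Samuel X) (ℓ : Samuel X)
    (hconv : Filter.Tendsto a Filter.atTop (nhds ℓ)) :
    ∀ ε > 0, ∀ᶠ n in Filter.atTop, samuelDist X (a n) ℓ < ε := by
  intro ε hε
  by_contra hnear
  have hfar : ∃ᶠ n in atTop, ∃ f : Lip1 X, ℓ.realEval f.1 + 3 * (ε / 6) < (a n).realEval f.1 := by
    refine (not_eventually.1 hnear).mono fun n hn => ?_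
    by_contra! hle
    exact hn ((Samuel.samuelDist_le_of_forall_realEval_le hle).trans_lt (by linarith))
  obtain ⟨r, hr, D, hD, hDc, hdisj, hrD⟩ :=
    Samuel.exists_subseq_disjoint_bumps hconv (by positivity) hfar
  exact Samuel.not_tendsto_of_disjoint_bumps hD hDc hdisj (by positivity) hrD
    (hconv.comp (hr.tendsto_atTop.comp (tendsto_add_atTop_nat 1)))
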